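/- Suppose every vertex of the square S(x₁,y₁,α) has first coordinate in [0,1] and strictly positive second coordinate, and let y₀ be the minimum of the second coordinates of its four vertices. Then the convex hull of X(x₁, y₁ − y₀, α, x₂, y₂, β) is contained in the convex hull of X(x₁, y₁, α, x₂, y₂, β); in particular μ(x₁, y₁ − y₀, α, x₂, y₂, β) ≤ μ(x₁, y₁, α, x₂, y₂, β), and the translated square touches the segment from E to F. -/

import Mathlib

open Real MeasureTheory

noncomputable def pt (x y : ℝ) : EuclideanSpace ℝ (Fin 2) :=
  (WithLp.equiv 2 (Fin 2 → ℝ)).symm ![x, y]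

noncomputable def sqVertex (x y a : ℝ) (k : Fin 4) : EuclideanSpace ℝ (Fin 2) :=
  pt (x + Real.sqrt 2 / 6 * Real.cos (a + ((k : ℕ) : ℝ) * (Real.pi / 2)))
     (y + Real.sqrt 2 / 6 * Real.sin (a + ((k : ℕ) : ℝ) * (Real.pi / 2)))

noncomputable def triVertex (x y b : ℝ) (k : Fin 3) : EuclideanSpace ℝ (Fin 2) :=
  pt (x + Real.sqrt 3 / 6 * Real.cos (b + ((k : ℕ) : ℝ) * (2 * Real.pi / 3)))
     (y + Real.sqrt 3 / 6 * Real.sin (b + ((k : ℕ) : ℝ) * (2 * Real.pi / 3)))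

noncomputable def config (x1 y1 a x2 y2 b : ℝ) : Set (EuclideanSpace ℝ (Fin 2)) :=
  {pt 0 0, pt 1 0} ∪ Set.range (sqVertex x1 y1 a) ∪ Set.range (triVertex x2 y2 b)

noncomputable def area (x1 y1 a x2 y2 b : ℝ) : ℝ :=
  (volume (convexHull ℝ (config x1 y1 a x2 y2 b))).toReal

/-!
Lowering a point `p` of the convex hull by `c ≤ p 1` keeps it in the hull: the vertical segment
from `p` down to the base `EF` lies in the hull, because the foot of `p` lies on `EF` when
`p 0 ∈ [0, 1]`. Lowering the square by the least height `y₀` of its vertices therefore moves every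
vertex inside the old hull, and the lowest vertex lands on `EF`.
-/

open Set AffineMap

@[simp] lemma pt_apply_zero (x y : ℝ) : pt x y 0 = x := rfl

@[simp] lemma pt_apply_one (x y : ℝ) : pt x y 1 = y := rfl

lemma pt_eta (p : EuclideanSpace ℝ (Fin 2)) : pt (p 0) (p 1) = p := by
  ext i; fin_cases i <;> rfl

lemma lineMap_pt_horizontal (y t : ℝ) : lineMap (pt 0 y) (pt 1 y) t = pt t y := by
  ext i; fin_cases i <;> simp [lineMap_apply_module', pt]

lemma lineMap_pt_vertical (x t : ℝ) : lineMap (pt x 0) (pt x 1) t = pt x t := by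
  ext i; fin_cases i <;> simp [lineMap_apply_module', pt]

lemma sqVertex_sub (x y a c : ℝ) (k : Fin 4) :
    sqVertex x (y - c) a k = pt (sqVertex x y a k 0) (sqVertex x y a k 1 - c) := by
  simp only [sqVertex, pt_apply_zero, pt_apply_one]
  ring_nf

lemma Convex.lineMap_mem_of_mem_Icc {E : Type*} [AddCommGroup E] [Module ℝ E] {s : Set E}
    (hs : Convex ℝ s) {p q : E} {t₀ t₁ t : ℝ} (h₀ : lineMap p q t₀ ∈ s)
    (h₁ : lineMap p q t₁ ∈ s) (ht : t ∈ Icc t₀ t₁) : lineMap p q t ∈ s :=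
  (hs.affine_preimage (lineMap p q)).ordConnected.out h₀ h₁ ht

lemma Convex.pt_mem_of_mem_Icc {s : Set (EuclideanSpace ℝ (Fin 2))} (hs : Convex ℝ s)
    (hE : pt 0 0 ∈ s) (hF : pt 1 0 ∈ s) {x y t : ℝ} (hp : pt x y ∈ s) (hx : x ∈ Icc 0 1)
    (ht : t ∈ Icc 0 y) : pt x t ∈ s := by
  have hfoot : pt x 0 ∈ s := by
    have h := hs.lineMap_mem_of_mem_Icc (p := pt 0 0) (q := pt 1 0) (t₀ := 0) (t₁ := 1) (t := x)
    simp only [lineMap_pt_horizontal] at h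
    exact h hE hF hx
  have h := hs.lineMap_mem_of_mem_Icc (p := pt x 0) (q := pt x 1) (t₀ := 0) (t₁ := y) (t := t)
  simp only [lineMap_pt_vertical] at h
  exact h hfoot hp ht

lemma config_finite (x1 y1 a x2 y2 b : ℝ) : (config x1 y1 a x2 y2 b).Finite :=
  ((toFinite _).union (finite_range _)).union (finite_range _)

lemma convexHull_config_sub_subset {x1 y1 a x2 y2 b c : ℝ}
    (hx : ∀ k : Fin 4, sqVertex x1 y1 a k 0 ∈ Icc (0 : ℝ) 1)
    (hc : ∀ k : Fin 4, c ∈ Icc 0 (sqVertex x1 y1 a k 1)) :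
    convexHull ℝ (config x1 (y1 - c) a x2 y2 b) ⊆ convexHull ℝ (config x1 y1 a x2 y2 b) := by
  set H := convexHull ℝ (config x1 y1 a x2 y2 b)
  have hH : Convex ℝ H := convex_convexHull ℝ _
  have hE : pt 0 0 ∈ H := subset_convexHull ℝ _ (Or.inl (Or.inl (Or.inl rfl)))
  have hF : pt 1 0 ∈ H := subset_convexHull ℝ _ (Or.inl (Or.inl (Or.inr rfl)))
  refine convexHull_min ?_ hH
  rintro p (((rfl | rfl) | ⟨k, rfl⟩) | hp)
  · exact hE
  · exact hF
  · have hv : pt (sqVertex x1 y1 a k 0) (sqVertex x1 y1 a k 1) ∈ H := by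
      rw [pt_eta]; exact subset_convexHull ℝ _ (Or.inl (Or.inr ⟨k, rfl⟩))
    rw [sqVertex_sub]
    exact hH.pt_mem_of_mem_Icc hE hF hv (hx k) 
      ⟨sub_nonneg.2 (hc k).2, sub_le_self _ (hc k).1⟩
  · exact subset_convexHull ℝ _ (Or.inr hp)

lemma area_mono {x1 y1 a x2 y2 b x1' y1' a' x2' y2' b' : ℝ}
    (h : convexHull ℝ (config x1' y1' a' x2' y2' b') ⊆ convexHull ℝ (config x1 y1 a x2 y2 b)) :
    area x1' y1' a' x2' y2' b' ≤ area x1 y1 a x2 y2 b :=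
  ENNReal.toReal_mono (((config_finite ..).isCompact_convexHull ℝ).measure_lt_top.ne)
    (measure_mono h)

theorem translate_square_down (x1 y1 a x2 y2 b y0 : ℝ)
    (hx : ∀ k : Fin 4, sqVertex x1 y1 a k 0 ∈ Set.Icc (0 : ℝ) 1)
    (hy : ∀ k : Fin 4, 0 < sqVertex x1 y1 a k 1)
    (hy0 : IsLeast {y : ℝ | ∃ k : Fin 4, y = sqVertex x1 y1 a k 1} y0) :
    convexHull ℝ (config x1 (y1 - y0) a x2 y2 b) ⊆
      convexHull ℝ (config x1 y1 a x2 y2 b) ∧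
    area x1 (y1 - y0) a x2 y2 b ≤ area x1 y1 a x2 y2 b ∧
    (convexHull ℝ (Set.range (sqVertex x1 (y1 - y0) a)) ∩
      segment ℝ (pt 0 0) (pt 1 0)).Nonempty := by
  obtain ⟨⟨k₀, rfl⟩, hleast⟩ := hy0
  have hsub := convexHull_config_sub_subset (x2 := x2) (y2 := y2) (b := b) hx
    fun k ↦ ⟨(hy k₀).le, hleast ⟨k, rfl⟩⟩
  refine ⟨hsub, area_mono hsub, sqVertex x1 (y1 - sqVertex x1 y1 a k₀ 1) a k₀,
    subset_convexHull ℝ _ ⟨k₀, rfl⟩, ?_⟩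
  rw [sqVertex_sub, sub_self]
  simpa only [lineMap_pt_horizontal] using lineMap_mem_segment ℝ (pt 0 0) (pt 1 0) (hx k₀)
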